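/- For every real x > 0, the remainder σ(x) = 12x · ln( Γ(x+1) / (√(2πx) · (x/e)^x) ) admits the integral representation σ(x) = 12x · ∫₀^∞ φ(t)·e^{−xt} dt, where φ(t) = (1/(e^t − 1) − 1/t + 1/2)/t. -/

import Mathlib

open Real MeasureTheory

/-- The Stirling remainder `σ(x) = 12x · ln( Γ(x+1) / (√(2πx)·(x/e)^x) )`. -/
noncomputable def stirlingSigma (x : ℝ) : ℝ :=
  12 * x * Real.log (Real.Gamma (x + 1) / (Real.sqrt (2 * π * x) * (x / Real.exp 1) ^ x))

/-- `φ(t) = (1/(eᵗ − 1) − 1/t + 1/2)/t`. -/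
noncomputable def binetPhi (t : ℝ) : ℝ :=
  (1 / (Real.exp t - 1) - 1 / t + 1 / 2) / t

open Set Filter Topology

namespace BinetAux

lemma exp_cubic_le {t : ℝ} (ht : 0 ≤ t) : 1 + t + t^2/2 + t^3/6 ≤ Real.exp t := by
  have h := Real.sum_le_exp_of_nonneg ht 4
  simp [Finset.sum_range_succ, Nat.factorial] at h
  norm_num at h
  linarith

lemma deriv1 (s : ℝ) : HasDerivAt (fun s : ℝ => 1 + (s - 1) * Real.exp s)
    (s * Real.exp s) s := by
  have h := (((hasDerivAt_id s).sub_const 1).mul (Real.hasDerivAt_exp s)).const_add 1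
  refine h.congr_deriv ?_
  simp only [id]
  ring

lemma deriv2 (s : ℝ) : HasDerivAt (fun s : ℝ => 2 + s - (2 - s) * Real.exp s)
    (1 + (s - 1) * Real.exp s) s := by
  have h := (((hasDerivAt_id s).const_add 2).sub
    (((hasDerivAt_id s).neg.const_add 2).mul (Real.hasDerivAt_exp s)))
  have h2 : HasDerivAt (fun x : ℝ => 2 + x - (2 + -x) * Real.exp x)
      (1 - (-1 * Real.exp s + (2 + -s) * Real.exp s)) s := by exact h
  have hfun : (fun x : ℝ => 2 + x - (2 - x) * Real.exp x)
      = (fun x : ℝ => 2 + x - (2 + -x) * Real.exp x) := by ext x; ring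
  rw [hfun]
  convert h2 using 1
  ring

/-- key: `(2−t)·e^t ≤ 2+t` for `t ≥ 0`. -/
lemma two_sub_mul_exp_le {t : ℝ} (ht : 0 ≤ t) : (2 - t) * Real.exp t ≤ 2 + t := by
  have h1 : ∀ s ∈ Set.Ici (0:ℝ), (0:ℝ) ≤ 1 + (s - 1) * Real.exp s := by
    have mono : MonotoneOn (fun s => 1 + (s - 1) * Real.exp s) (Set.Ici 0) := by
      refine monotoneOn_of_deriv_nonneg (convex_Ici 0) (by fun_prop)
        (fun s hs => (deriv1 s).differentiableAt.differentiableWithinAt) (fun s hs => ?_)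
      rw [(deriv1 s).deriv]
      simp only [interior_Ici, Set.mem_Ioi] at hs
      positivity
    intro s hs
    have := mono (Set.self_mem_Ici) hs hs
    simpa using this
  have mono : MonotoneOn (fun s : ℝ => 2 + s - (2 - s) * Real.exp s) (Set.Ici 0) := by
    refine monotoneOn_of_deriv_nonneg (convex_Ici 0) (by fun_prop)
      (fun s hs => (deriv2 s).differentiableAt.differentiableWithinAt) (fun s hs => ?_)
    rw [(deriv2 s).deriv]
    simp only [interior_Ici, Set.mem_Ioi] at hs
    exact h1 s hs.le
  have := mono (Set.self_mem_Ici) ht ht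
  simp only [Real.exp_zero] at this
  linarith

lemma exp_sub_one_pos {t : ℝ} (ht : 0 < t) : 0 < Real.exp t - 1 := by
  have := Real.add_one_lt_exp (x := t) ht.ne'
  linarith

lemma binetPhi_nonneg {t : ℝ} (ht : 0 < t) : 0 ≤ binetPhi t := by
  have he : 0 < Real.exp t - 1 := exp_sub_one_pos ht
  have key : (Real.exp t - 1) * (2 - t) ≤ 2 * t := by
    have h := two_sub_mul_exp_le ht.le
    nlinarith [Real.exp_pos t]
  rw [binetPhi]
  apply div_nonneg _ ht.le
  have h : 1 / (Real.exp t - 1) - 1 / t + 1 / 2 =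
      (2*t - (Real.exp t - 1)*(2 - t)) / (2*t*(Real.exp t - 1)) := by
    field_simp
    ring
  rw [h]
  apply div_nonneg (by linarith) (by positivity)

lemma binetPhi_le_half {t : ℝ} (ht : 0 < t) : binetPhi t ≤ 1/2 := by
  have he : 0 < Real.exp t - 1 := exp_sub_one_pos ht
  have hc := exp_cubic_le ht.le
  rw [binetPhi, div_le_iff₀ ht, ← sub_nonneg]
  have h : 1/2*t - (1/(Real.exp t - 1) - 1/t + 1/2) =
      ((Real.exp t - 1)*(2 - t + t^2) - 2*t) / (2*t*(Real.exp t - 1)) := by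
    field_simp
    ring
  rw [h]
  apply div_nonneg _ (by positivity)
  have h5 : (0:ℝ) ≤ 2 - t + t^2 := by nlinarith
  have h6 : (t + t^2/2 + t^3/6) * (2 - t + t^2) ≤ (Real.exp t - 1) * (2 - t + t^2) :=
    mul_le_mul_of_nonneg_right (by linarith) h5
  nlinarith [h6, pow_nonneg ht.le 3, pow_nonneg ht.le 4, pow_nonneg ht.le 5]

lemma abs_binetPhi_le {t : ℝ} (ht : 0 < t) : |binetPhi t| ≤ 1/2 :=
  abs_le.2 ⟨by linarith [binetPhi_nonneg ht], binetPhi_le_half ht⟩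


open Set Filter Topology

/-- `∫ t in Ioi 0, exp (-x*t) = 1/x` for `0 < x`. -/
lemma integral_exp_neg_mul {x : ℝ} (hx : 0 < x) :
    ∫ t in Ioi (0:ℝ), Real.exp (-x*t) = 1/x := by
  have hderiv : ∀ t ∈ Ioi (0:ℝ), HasDerivAt (fun t => -Real.exp (-x*t)/x) (Real.exp (-x*t)) t := by
    intro t _
    have h := ((Real.hasDerivAt_exp (-x*t)).comp t ((hasDerivAt_id t).const_mul (-x))).neg.div_const x
    refine h.congr_deriv ?_
    rw [mul_one, mul_neg, neg_neg, mul_div_assoc, div_self hx.ne', mul_one]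
  have hint : IntegrableOn (fun t => Real.exp (-x*t)) (Ioi 0) := exp_neg_integrableOn_Ioi 0 hx
  have htend : Tendsto (fun t => -Real.exp (-x*t)/x) atTop (𝓝 0) := by
    have : Tendsto (fun t : ℝ => -x*t) atTop atBot := by
      apply Tendsto.const_mul_atTop_of_neg (by linarith : -x < 0) tendsto_id
    have h2 := (Real.tendsto_exp_atBot.comp this).neg.div_const x
    simpa using h2
  have hcont : ContinuousWithinAt (fun t => -Real.exp (-x*t)/x) (Ici 0) 0 := Continuous.continuousWithinAt (by fun_prop)
  have := integral_Ioi_of_hasDerivAt_of_tendsto hcont hderiv hint htend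
  rw [this]
  field_simp
  simp

lemma continuousOn_binetPhi : ContinuousOn binetPhi (Ioi (0:ℝ)) := by
  apply ContinuousOn.div _ continuousOn_id (fun t ht => (mem_Ioi.1 ht).ne')
  apply ContinuousOn.add
  · apply ContinuousOn.sub
    · exact continuousOn_const.div (Real.continuous_exp.continuousOn.sub continuousOn_const)
        (fun t ht => (exp_sub_one_pos (mem_Ioi.1 ht)).ne')
    · exact continuousOn_const.div continuousOn_id (fun t ht => (mem_Ioi.1 ht).ne')
  · exact continuousOn_const

lemma integrableOn_phi_exp {x : ℝ} (hx : 0 < x) :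
    IntegrableOn (fun t => binetPhi t * Real.exp (-x*t)) (Ioi 0) := by
  have hint : IntegrableOn (fun t => (1/2 : ℝ) * Real.exp (-x*t)) (Ioi 0) :=
    (exp_neg_integrableOn_Ioi 0 hx).const_mul _
  apply Integrable.mono' hint
  · exact (continuousOn_binetPhi.mul (Real.continuous_exp.comp
      (continuous_const.mul continuous_id)).continuousOn).aestronglyMeasurable measurableSet_Ioi
  · filter_upwards [ae_restrict_mem measurableSet_Ioi] with t ht
    rw [norm_mul, Real.norm_eq_abs, Real.norm_eq_abs, abs_of_pos (Real.exp_pos _)]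
    exact mul_le_mul_of_nonneg_right (abs_binetPhi_le ht) (Real.exp_pos _).le

noncomputable def mu (x : ℝ) : ℝ := ∫ t in Ioi (0:ℝ), binetPhi t * Real.exp (-x*t)

lemma abs_mu_le {x : ℝ} (hx : 0 < x) : |mu x| ≤ 1/(2*x) := by
  have habs : IntegrableOn (fun t => |binetPhi t| * Real.exp (-x*t)) (Ioi 0) := by
    exact IntegrableOn.congr_fun (integrableOn_phi_exp hx).abs
      (fun t ht => by rw [abs_mul, abs_of_pos (Real.exp_pos _)]) measurableSet_Ioi
  have h1 : |mu x| ≤ ∫ t in Ioi (0:ℝ), |binetPhi t| * Real.exp (-x*t) := by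
    have := MeasureTheory.norm_integral_le_integral_norm (μ := volume.restrict (Ioi 0))
      (f := fun t => binetPhi t * Real.exp (-x*t))
    simpa [Real.norm_eq_abs, mu, abs_mul, Real.abs_exp] using this
  have h2 : ∫ t in Ioi (0:ℝ), |binetPhi t| * Real.exp (-x*t)
      ≤ ∫ t in Ioi (0:ℝ), (1/2 : ℝ) * Real.exp (-x*t) := by
    apply setIntegral_mono_on habs
      ((exp_neg_integrableOn_Ioi 0 hx).const_mul _) measurableSet_Ioi
    intro t ht
    exact mul_le_mul_of_nonneg_right (abs_binetPhi_le ht) (Real.exp_pos _).le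
  have h3 : ∫ t in Ioi (0:ℝ), (1/2 : ℝ) * Real.exp (-x*t) = 1/(2*x) := by
    rw [MeasureTheory.integral_const_mul, integral_exp_neg_mul hx]
    field_simp
  linarith

lemma one_sub_exp_neg_le {u : ℝ} : 1 - Real.exp (-u) ≤ u := by
  have := Real.add_one_le_exp (-u)
  linarith

lemma interval_exp_eval {t : ℝ} (a b : ℝ) (ht : 0 < t) :
    ∫ s in a..b, Real.exp (-s*t) = (Real.exp (-a*t) - Real.exp (-b*t))/t := by
  have h : ∀ s : ℝ, -s*t = -t*s := fun s => by ring
  simp_rw [h]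
  rw [intervalIntegral.integral_comp_mul_left (fun u => Real.exp u) (by linarith : -t ≠ 0)]
  rw [integral_exp, smul_eq_mul]
  rw [eq_div_iff ht.ne']
  field_simp
  ring

lemma exp_key {a b t : ℝ} : Real.exp (-a*t) * (1 - Real.exp (-((b-a)*t)))
    = Real.exp (-a*t) - Real.exp (-b*t) := by
  rw [mul_sub, mul_one, ← Real.exp_add]
  congr 2
  ring

lemma integrableOn_exp_diff_div {a b : ℝ} (ha : 0 < a) (hab : a ≤ b) :
    IntegrableOn (fun t => (Real.exp (-a*t) - Real.exp (-b*t))/t) (Ioi 0) := by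
  have hint : IntegrableOn (fun t => (b-a) * Real.exp (-a*t)) (Ioi 0) :=
    (exp_neg_integrableOn_Ioi 0 ha).const_mul _
  apply Integrable.mono' hint
  · apply ContinuousOn.aestronglyMeasurable _ measurableSet_Ioi
    exact ((Real.continuous_exp.comp (continuous_const.mul continuous_id)).continuousOn.sub
      (Real.continuous_exp.comp (continuous_const.mul continuous_id)).continuousOn).div
      continuousOn_id (fun t ht => (mem_Ioi.1 ht).ne')
  · filter_upwards [ae_restrict_mem measurableSet_Ioi] with t ht
    rw [mem_Ioi] at ht
    have e2 : 1 - Real.exp (-((b-a)*t)) ≤ (b-a)*t := one_sub_exp_neg_le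
    have e3 : 0 ≤ 1 - Real.exp (-((b-a)*t)) := by
      have : Real.exp (-((b-a)*t)) ≤ 1 := Real.exp_le_one_iff.2 (by nlinarith)
      linarith
    have e1 : 0 ≤ Real.exp (-a*t) - Real.exp (-b*t) := by
      rw [← exp_key]
      positivity
    rw [Real.norm_eq_abs, abs_div, abs_of_nonneg e1, abs_of_pos ht, div_le_iff₀ ht]
    calc Real.exp (-a*t) - Real.exp (-b*t) = Real.exp (-a*t) * (1 - Real.exp (-((b-a)*t))) :=
      exp_key.symm
    _ ≤ Real.exp (-a*t) * ((b-a)*t) := mul_le_mul_of_nonneg_left e2 (Real.exp_pos _).le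
    _ = (b-a) * Real.exp (-a*t) * t := by ring

lemma frullani_exp {a b : ℝ} (ha : 0 < a) (hab : a ≤ b) :
    ∫ t in Ioi (0:ℝ), (Real.exp (-a*t) - Real.exp (-b*t))/t = Real.log (b/a) := by
  have hb : 0 < b := lt_of_lt_of_le ha hab
  -- integrability of the uncurried function on (Ioi 0) ×ˢ (Ioc a b)
  set μ := volume.restrict (Ioi (0:ℝ))
  set ν := volume.restrict (Ioc a b)
  have hmeas : AEStronglyMeasurable (Function.uncurry fun t s => Real.exp (-s*t)) (μ.prod ν) := by
    apply Continuous.aestronglyMeasurable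
    fun_prop
  have hintprod : Integrable (Function.uncurry fun t s => Real.exp (-s*t)) (μ.prod ν) := by
    rw [MeasureTheory.integrable_prod_iff hmeas]
    constructor
    · filter_upwards [ae_restrict_mem measurableSet_Ioi] with t ht
      exact (Continuous.integrableOn_Ioc (by fun_prop))
    · apply MeasureTheory.Integrable.congr
        (f := fun t => (Real.exp (-a*t) - Real.exp (-b*t))/t)
        (integrableOn_exp_diff_div ha hab)
      filter_upwards [ae_restrict_mem measurableSet_Ioi] with t ht
      rw [mem_Ioi] at ht
      show (Real.exp (-a*t) - Real.exp (-b*t))/t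
          = ∫ s, ‖Function.uncurry (fun t s => Real.exp (-s*t)) (t, s)‖ ∂ν
      simp only [Function.uncurry, Real.norm_eq_abs, Real.abs_exp]
      rw [show ν = volume.restrict (Ioc a b) from rfl, ← intervalIntegral.integral_of_le hab,
        interval_exp_eval a b ht]
  have swap := MeasureTheory.integral_integral_swap hintprod
  -- LHS of swap : ∫ t, ∫ s, exp (-s*t) dν dμ
  have lhs_eq : (∫ t, ∫ s, Real.exp (-s*t) ∂ν ∂μ)
      = ∫ t in Ioi (0:ℝ), (Real.exp (-a*t) - Real.exp (-b*t))/t := by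
    apply setIntegral_congr_fun measurableSet_Ioi
    intro t ht
    rw [mem_Ioi] at ht
    show (∫ s, Real.exp (-s*t) ∂ν) = _
    rw [show ν = volume.restrict (Ioc a b) from rfl, ← intervalIntegral.integral_of_le hab,
      interval_exp_eval a b ht]
  have rhs_eq : (∫ s, ∫ t, Real.exp (-s*t) ∂μ ∂ν) = Real.log (b/a) := by
    have : ∀ s ∈ Ioc a b, (∫ t, Real.exp (-s*t) ∂μ) = 1/s := by
      intro s hs
      show (∫ t, Real.exp (-s*t) ∂μ) = _
      exact integral_exp_neg_mul (lt_of_lt_of_le ha hs.1.le)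
    rw [setIntegral_congr_fun measurableSet_Ioc this, ← intervalIntegral.integral_of_le hab,
      integral_one_div (by intro h; rw [Set.mem_uIcc] at h; rcases h with ⟨h1,_⟩|⟨_,h2⟩ <;> linarith)]
  rw [← lhs_eq, swap, rhs_eq]


variable {x : ℝ}

/-- the function `H`. -/
noncomputable def Hfun (x t : ℝ) : ℝ :=
  if t = 0 then 1 else (Real.exp (-x*t) - Real.exp (-(x+1)*t))/t

/-- derivative of `H`. -/
noncomputable def Hd (x t : ℝ) : ℝ :=
  (-x*Real.exp (-x*t) + (x+1)*Real.exp (-(x+1)*t))/t - (Real.exp (-x*t) - Real.exp (-(x+1)*t))/t^2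

lemma hasDerivAt_G (x t : ℝ) : HasDerivAt (fun t => Real.exp (-x*t) - Real.exp (-(x+1)*t))
    (-x*Real.exp (-x*t) + (x+1)*Real.exp (-(x+1)*t)) t := by
  have h1 := (Real.hasDerivAt_exp (-x*t)).comp t ((hasDerivAt_id t).const_mul (-x))
  have h2 := (Real.hasDerivAt_exp (-(x+1)*t)).comp t ((hasDerivAt_id t).const_mul (-(x+1)))
  refine (h1.sub h2).congr_deriv ?_
  ring

lemma hasDerivAt_Hfun {t : ℝ} (ht : 0 < t) : HasDerivAt (Hfun x) (Hd x t) t := by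
  have hne : ∀ᶠ s in 𝓝 t, Hfun x s = (Real.exp (-x*s) - Real.exp (-(x+1)*s))/s := by
    filter_upwards [eventually_ne_nhds ht.ne'] with s hs
    rw [Hfun, if_neg hs]
  have hd : HasDerivAt (fun s => (Real.exp (-x*s) - Real.exp (-(x+1)*s))/s) (Hd x t) t := by
    have := (hasDerivAt_G x t).div (hasDerivAt_id t) ht.ne'
    refine this.congr_deriv ?_
    rw [Hd, id]
    field_simp
  exact hd.congr_of_eventuallyEq hne

lemma Hfun_cont : ContinuousWithinAt (Hfun x) (Ici 0) 0 := by
  rw [← continuousWithinAt_Ioi_iff_Ici]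
  have hslope : Tendsto (fun t => (Real.exp (-x*t) - Real.exp (-(x+1)*t))/t) (𝓝[≠] (0:ℝ)) (𝓝 1) := by
    have hG := hasDerivAt_G x 0
    rw [hasDerivAt_iff_tendsto_slope] at hG
    have : ∀ t : ℝ, t ≠ 0 → slope (fun t => Real.exp (-x*t) - Real.exp (-(x+1)*t)) 0 t
        = (Real.exp (-x*t) - Real.exp (-(x+1)*t))/t := by
      intro t ht
      rw [slope_def_field]
      simp [div_eq_iff ht]
    have h2 : Tendsto (fun t => (Real.exp (-x*t) - Real.exp (-(x+1)*t))/t) (𝓝[≠] (0:ℝ))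
        (𝓝 (-x*Real.exp (-x*0) + (x+1)*Real.exp (-(x+1)*0))) := by
      apply hG.congr'
      filter_upwards [self_mem_nhdsWithin] with t ht
      exact this t ht
    simpa using h2
  have : Tendsto (Hfun x) (𝓝[>] (0:ℝ)) (𝓝 1) := by
    apply hslope.mono_left (nhdsWithin_mono 0 (fun t ht => (mem_Ioi.1 ht).ne')) |>.congr'
    filter_upwards [self_mem_nhdsWithin] with t ht
    rw [Hfun, if_neg (mem_Ioi.1 ht).ne']
  rw [ContinuousWithinAt, Hfun, if_pos rfl]
  exact this

lemma Hfun_tendsto (hx : 0 < x) : Tendsto (Hfun x) atTop (𝓝 0) := by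
  have h1 : Tendsto (fun t => Real.exp (-x*t) - Real.exp (-(x+1)*t)) atTop (𝓝 0) := by
    have e1 : Tendsto (fun t : ℝ => Real.exp (-x*t)) atTop (𝓝 0) := by
      apply Real.tendsto_exp_atBot.comp
      exact Tendsto.const_mul_atTop_of_neg (by linarith) tendsto_id
    have e2 : Tendsto (fun t : ℝ => Real.exp (-(x+1)*t)) atTop (𝓝 0) := by
      apply Real.tendsto_exp_atBot.comp
      exact Tendsto.const_mul_atTop_of_neg (by linarith) tendsto_id
    simpa using e1.sub e2
  have h2 : Tendsto (fun t : ℝ => t⁻¹) atTop (𝓝 0) := tendsto_inv_atTop_zero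
  have := h1.mul h2
  rw [mul_zero] at this
  apply this.congr'
  filter_upwards [eventually_gt_atTop (0:ℝ)] with t ht
  rw [Hfun, if_neg ht.ne', div_eq_mul_inv]

/-- pointwise decomposition on `Ioi 0`. -/
lemma phi_decomp {t : ℝ} (ht : 0 < t) :
    binetPhi t * Real.exp (-x*t) - binetPhi t * Real.exp (-(x+1)*t)
      = Hd x t + (x+1/2) * ((Real.exp (-x*t) - Real.exp (-(x+1)*t))/t) := by
  have hE : Real.exp t ≠ 0 := (Real.exp_pos t).ne'
  have hE1 : Real.exp t - 1 ≠ 0 := (exp_sub_one_pos ht).ne'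
  have e1 : Real.exp (-(x+1)*t) = Real.exp (-x*t) * (Real.exp t)⁻¹ := by
    rw [← Real.exp_neg, ← Real.exp_add]
    congr 1
    ring
  rw [binetPhi, Hd, e1]
  field_simp
  ring

lemma integrableOn_Hd (hx : 0 < x) : IntegrableOn (Hd x) (Ioi 0) := by
  have h1 : IntegrableOn (fun t => binetPhi t * Real.exp (-x*t)
      - binetPhi t * Real.exp (-(x+1)*t)
      - (x+1/2) * ((Real.exp (-x*t) - Real.exp (-(x+1)*t))/t)) (Ioi 0) :=
    ((integrableOn_phi_exp hx).sub (integrableOn_phi_exp (by linarith))).sub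
      (((integrableOn_exp_diff_div hx (by linarith)).const_mul _))
  apply h1.congr_fun _ measurableSet_Ioi
  intro t ht
  have := phi_decomp (x := x) (mem_Ioi.1 ht)
  dsimp only
  linarith

lemma integral_Hd (hx : 0 < x) : ∫ t in Ioi (0:ℝ), Hd x t = -1 := by
  have := integral_Ioi_of_hasDerivAt_of_tendsto (f := Hfun x) (f' := Hd x) Hfun_cont
    (fun t ht => hasDerivAt_Hfun (mem_Ioi.1 ht)) (integrableOn_Hd hx) (Hfun_tendsto hx)
  rw [this, Hfun, if_pos rfl]
  norm_num

lemma mu_rec (hx : 0 < x) : mu x - mu (x+1) = (x+1/2) * Real.log ((x+1)/x) - 1 := by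
  have hx1 : (0:ℝ) < x+1 := by linarith
  have hsub : mu x - mu (x+1) = ∫ t in Ioi (0:ℝ),
      (binetPhi t * Real.exp (-x*t) - binetPhi t * Real.exp (-(x+1)*t)) := by
    rw [mu, mu, ← integral_sub (integrableOn_phi_exp hx) (integrableOn_phi_exp hx1)]
  rw [hsub]
  have hcongr : ∫ t in Ioi (0:ℝ),
      (binetPhi t * Real.exp (-x*t) - binetPhi t * Real.exp (-(x+1)*t))
      = ∫ t in Ioi (0:ℝ), (Hd x t + (x+1/2) * ((Real.exp (-x*t) - Real.exp (-(x+1)*t))/t)) := by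
    apply setIntegral_congr_fun measurableSet_Ioi
    intro t ht
    exact phi_decomp (mem_Ioi.1 ht)
  rw [hcongr, integral_add (integrableOn_Hd hx)
    (((integrableOn_exp_diff_div hx (by linarith)).const_mul _)), integral_Hd hx,
    MeasureTheory.integral_const_mul, frullani_exp hx (by linarith)]
  ring


noncomputable def sfun (y : ℝ) : ℝ := (y + 1/2) * Real.log y - y + Real.log (2*π)/2
noncomputable def gfun (y : ℝ) : ℝ := Real.log (Real.Gamma (y+1)) - sfun y

lemma gfun_eq {x : ℝ} (hx : 0 < x) :
    Real.log (Real.Gamma (x + 1) / (Real.sqrt (2 * π * x) * (x / Real.exp 1) ^ x)) = gfun x := by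
  have hπ : (0:ℝ) < π := Real.pi_pos
  have hΓ : 0 < Real.Gamma (x+1) := Real.Gamma_pos_of_pos (by linarith)
  have hsq : 0 < Real.sqrt (2*π*x) := Real.sqrt_pos.2 (by positivity)
  have hxe : 0 < x / Real.exp 1 := by positivity
  have hrp : 0 < (x / Real.exp 1) ^ x := Real.rpow_pos_of_pos hxe x
  rw [Real.log_div hΓ.ne' (by positivity), Real.log_mul hsq.ne' hrp.ne',
    Real.log_rpow hxe, Real.log_div hx.ne' (Real.exp_pos 1).ne', Real.log_exp,
    Real.log_sqrt (by positivity), Real.log_mul (by positivity) hx.ne',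
    gfun, sfun]
  ring

lemma gfun_rec {x : ℝ} (hx : 0 < x) :
    gfun x - gfun (x+1) = (x+1/2) * Real.log ((x+1)/x) - 1 := by
  have hx1 : (0:ℝ) < x + 1 := by linarith
  have hΓ : 0 < Real.Gamma (x+1) := Real.Gamma_pos_of_pos (by linarith)
  have hrec : Real.Gamma (x+1+1) = (x+1) * Real.Gamma (x+1) := Real.Gamma_add_one hx1.ne'
  rw [gfun, gfun, sfun, sfun, hrec, Real.log_mul hx1.ne' hΓ.ne',
    Real.log_div hx1.ne' hx.ne']
  ring

/-- `gfun` at naturals tends to `0`, from Mathlib's Stirling formula. -/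
lemma gfun_nat_eq {n : ℕ} (hn : 1 ≤ n) :
    gfun n = Real.log (Stirling.stirlingSeq n) - Real.log (Real.sqrt π) := by
  have hπ : (0:ℝ) < π := Real.pi_pos
  have hn' : (0:ℝ) < n := by exact_mod_cast hn
  have hfac : Real.Gamma ((n:ℝ)+1) = (n.factorial : ℝ) := Real.Gamma_nat_eq_factorial n
  have hfacpos : (0:ℝ) < (n.factorial : ℝ) := by exact_mod_cast Nat.factorial_pos n
  have hsq : (0:ℝ) < Real.sqrt (2*n) := Real.sqrt_pos.2 (by positivity)
  have hpow : (0:ℝ) < ((n:ℝ) / Real.exp 1) ^ (n:ℕ) := by positivity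
  rw [gfun, sfun, hfac]
  rw [Stirling.stirlingSeq, Real.log_div hfacpos.ne' (by positivity),
    Real.log_mul hsq.ne' hpow.ne', Real.log_pow, Real.log_div hn'.ne' (Real.exp_pos 1).ne',
    Real.log_exp, Real.log_sqrt (by positivity), Real.log_sqrt hπ.le,
    Real.log_mul two_ne_zero hn'.ne', Real.log_mul two_ne_zero hπ.ne']
  ring

lemma tendsto_gfun_nat : Tendsto (fun n : ℕ => gfun n) atTop (𝓝 0) := by
  have hπ : (0:ℝ) < Real.sqrt π := Real.sqrt_pos.2 Real.pi_pos
  have h1 : Tendsto (fun n : ℕ => Real.log (Stirling.stirlingSeq n) - Real.log (Real.sqrt π))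
      atTop (𝓝 0) := by
    have h2 : Tendsto (fun n : ℕ => Real.log (Stirling.stirlingSeq n)) atTop
        (𝓝 (Real.log (Real.sqrt π))) :=
      ((Real.continuousAt_log hπ.ne').tendsto).comp Stirling.tendsto_stirlingSeq_sqrt_pi
    simpa using h2.sub_const (Real.log (Real.sqrt π))
  apply h1.congr'
  filter_upwards [eventually_ge_atTop 1] with n hn
  exact (gfun_nat_eq hn).symm

section Sandwich

variable {m θ : ℝ}

lemma log_facts (hm : 1 ≤ m) (hθ0 : 0 ≤ θ) (hθ1 : θ < 1) :
    m * (Real.log (m+1) - Real.log m) ≤ 1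
    ∧ m * (Real.log (m+θ) - Real.log m) ≤ θ
    ∧ θ ≤ (m+θ) * (Real.log (m+θ) - Real.log m)
    ∧ 0 ≤ Real.log (m+θ) - Real.log m := by
  have hm0 : (0:ℝ) < m := by linarith
  have hmθ : (0:ℝ) < m + θ := by linarith
  refine ⟨?_, ?_, ?_, ?_⟩
  · have h := Real.log_le_sub_one_of_pos (show (0:ℝ) < (m+1)/m by positivity)
    rw [Real.log_div (by linarith) hm0.ne'] at h
    have h2 := mul_le_mul_of_nonneg_left h hm0.le
    have h3 : m * ((m+1)/m - 1) = 1 := by field_simp; ring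
    linarith
  · have h := Real.log_le_sub_one_of_pos (show (0:ℝ) < (m+θ)/m by positivity)
    rw [Real.log_div hmθ.ne' hm0.ne'] at h
    have h2 := mul_le_mul_of_nonneg_left h hm0.le
    have h3 : m * ((m+θ)/m - 1) = θ := by field_simp; ring
    linarith
  · have h := Real.log_le_sub_one_of_pos (show (0:ℝ) < m/(m+θ) by positivity)
    rw [Real.log_div hm0.ne' hmθ.ne'] at h
    have h2 := mul_le_mul_of_nonneg_left h hmθ.le
    have h3 : (m+θ) * (m/(m+θ) - 1) = -θ := by field_simp; ring
    linarith
  · have := Real.log_le_log hm0 (show m ≤ m + θ by linarith)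
    linarith

lemma gfun_upper (hm : 1 ≤ m) (hθ0 : 0 ≤ θ) (hθ1 : θ < 1) :
    gfun (m+θ) ≤ (1-θ) * gfun m + θ * gfun (m+1) + 3/(2*m) := by
  obtain ⟨hmb, ha_ub, haθ, ha0⟩ := log_facts hm hθ0 hθ1
  have hm0 : (0:ℝ) < m := by linarith
  have hconv := Real.convexOn_log_Gamma
  have hcvx := hconv.2 (show (m+1:ℝ) ∈ Ioi 0 by simp; linarith)
    (show (m+2:ℝ) ∈ Ioi 0 by simp; linarith) (by linarith : (0:ℝ) ≤ 1-θ) hθ0 (by ring)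
  have hpt : (1-θ) • (m+1) + θ • (m+2) = m + θ + 1 := by simp; ring
  rw [hpt] at hcvx
  -- E₁ bound
  have key : m * ((1-θ)*sfun m + θ*sfun (m+1) - sfun (m+θ)) ≤ 3/2 := by
    have f1 : θ*(m+3/2)*(m*(Real.log (m+1) - Real.log m)) ≤ θ*(m+3/2)*1 :=
      mul_le_mul_of_nonneg_left hmb (by nlinarith)
    have f2 : m*θ ≤ m*((m+θ+1/2)*(Real.log (m+θ) - Real.log m)) := by nlinarith
    rw [sfun, sfun, sfun]
    nlinarith [f1, f2]
  have hE : (1-θ)*sfun m + θ*sfun (m+1) - sfun (m+θ) ≤ 3/(2*m) := by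
    rw [le_div_iff₀ (by positivity)]
    nlinarith
  have hcvx' : Real.log (Real.Gamma (m+θ+1)) ≤
      (1-θ) * Real.log (Real.Gamma (m+1)) + θ * Real.log (Real.Gamma (m+2)) := by
    simpa [Function.comp] using hcvx
  rw [gfun, gfun, gfun]
  have e2 : (m:ℝ)+1+1 = m+2 := by ring
  rw [e2]
  linarith

lemma gfun_lower (hm : 1 ≤ m) (hθ0 : 0 ≤ θ) (hθ1 : θ < 1) :
    gfun m - 3/(2*m) ≤ gfun (m+θ) := by
  obtain ⟨hmb, ha_ub, haθ, ha0⟩ := log_facts hm hθ0 hθ1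
  have hm0 : (0:ℝ) < m := by linarith
  -- E₂ bound : sfun (m+θ) - sfun m - θ * log m ≤ 3/(2m)
  have key : m * (sfun (m+θ) - sfun m - θ * Real.log m) ≤ 3/2 := by
    have g1 : (m+θ+1/2)*(m*(Real.log (m+θ) - Real.log m)) ≤ (m+θ+1/2)*θ :=
      mul_le_mul_of_nonneg_left ha_ub (by linarith)
    rw [sfun, sfun]
    nlinarith [g1]
  have hE : sfun (m+θ) - sfun m - θ * Real.log m ≤ 3/(2*m) := by
    rw [le_div_iff₀ (by positivity)]
    nlinarith
  rcases eq_or_lt_of_le hθ0 with rfl | hθpos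
  · rw [add_zero]
    have : 0 < 3/(2*m) := by positivity
    linarith
  -- convexity slope argument
  have hconv := Real.convexOn_log_Gamma
  have hslope := hconv.slope_mono_adjacent (show (m:ℝ) ∈ Ioi 0 from hm0)
    (show (m+1+θ:ℝ) ∈ Ioi 0 by simp; linarith)
    (show (m:ℝ) < m+1 by linarith) (show (m:ℝ)+1 < m+1+θ by linarith)
  have hrec : Real.Gamma (m+1) = m * Real.Gamma m := Real.Gamma_add_one hm0.ne'
  have hΓm : 0 < Real.Gamma m := Real.Gamma_pos_of_pos hm0
  have hlogrec : Real.log (Real.Gamma (m+1)) - Real.log (Real.Gamma m) = Real.log m := by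
    rw [hrec, Real.log_mul hm0.ne' hΓm.ne']
    ring
  -- hslope : (f(m+1)-f(m))/(m+1-m) ≤ (f(m+1+θ)-f(m+1))/(m+1+θ-(m+1))
  have hs2 : Real.log m ≤ (Real.log (Real.Gamma (m+1+θ)) - Real.log (Real.Gamma (m+1)))/θ := by
    have e1 : (m:ℝ)+1-m = 1 := by ring
    have e2 : (m:ℝ)+1+θ-(m+1) = θ := by ring
    simpa [Function.comp, e1, e2, hlogrec] using hslope
  have hs3 : θ * Real.log m ≤ Real.log (Real.Gamma (m+1+θ)) - Real.log (Real.Gamma (m+1)) := by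
    rw [le_div_iff₀ hθpos] at hs2
    linarith [hs2]
  rw [gfun, gfun]
  have e3 : (m:ℝ)+θ+1 = m+1+θ := by ring
  rw [e3]
  linarith

end Sandwich

lemma tendsto_err (c : ℝ) :
    Tendsto (fun n : ℕ => 3/(2*(c + (n:ℝ)))) atTop (𝓝 0) := by
  have h1 : Tendsto (fun n : ℕ => 2*(c + (n:ℝ))) atTop atTop := by
    apply Tendsto.const_mul_atTop two_pos
    exact tendsto_atTop_add_const_left _ c tendsto_natCast_atTop_atTop
  have h2 := (tendsto_inv_atTop_zero).comp h1
  have h3 := h2.const_mul (3:ℝ)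
  simpa [Function.comp, div_eq_mul_inv] using h3

lemma tendsto_mu_shift {x : ℝ} (hx : 0 < x) :
    Tendsto (fun n : ℕ => mu (x + n)) atTop (𝓝 0) := by
  refine squeeze_zero_norm (a := fun n : ℕ => 3/(2*(x + (n:ℝ)))) (fun n => ?_) (tendsto_err x)
  have hxn : (0:ℝ) < x + n := by positivity
  have h1 := abs_mu_le hxn
  have h2 : 1/(2*(x + (n:ℝ))) ≤ 3/(2*(x + (n:ℝ))) := by
    gcongr
    norm_num
  rw [Real.norm_eq_abs]
  linarith

lemma tendsto_gfun_shift {x : ℝ} (hx : 0 < x) :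
    Tendsto (fun n : ℕ => gfun (x + n)) atTop (𝓝 0) := by
  set m₀ := ⌊x⌋₊ with hm₀
  set θ := x - m₀ with hθdef
  have hθ0 : 0 ≤ θ := by
    have := Nat.floor_le hx.le
    rw [hθdef]; linarith
  have hθ1 : θ < 1 := by
    have := Nat.lt_floor_add_one x
    rw [hθdef]; linarith
  have comp0 : Tendsto (fun n : ℕ => m₀ + n) atTop atTop :=
    (tendsto_add_atTop_nat m₀).congr (fun n => add_comm n m₀)
  have comp1 : Tendsto (fun n : ℕ => m₀ + n + 1) atTop atTop :=
    (tendsto_add_atTop_nat (m₀+1)).congr (fun n => by omega)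
  have hgseq : Tendsto (fun n : ℕ => gfun ((m₀ + n : ℕ) : ℝ)) atTop (𝓝 0) :=
    tendsto_gfun_nat.comp comp0
  have hgseq1 : Tendsto (fun n : ℕ => gfun ((m₀ + n + 1 : ℕ) : ℝ)) atTop (𝓝 0) :=
    tendsto_gfun_nat.comp comp1
  have hlow : Tendsto (fun n : ℕ => gfun ((m₀ + n : ℕ) : ℝ) - 3/(2*((m₀:ℝ) + (n:ℝ))))
      atTop (𝓝 0) := by
    simpa using hgseq.sub (tendsto_err (m₀:ℝ))
  have hup : Tendsto (fun n : ℕ => (1-θ) * gfun ((m₀ + n : ℕ) : ℝ)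
      + θ * gfun ((m₀ + n + 1 : ℕ) : ℝ) + 3/(2*((m₀:ℝ) + (n:ℝ)))) atTop (𝓝 0) := by
    have := ((hgseq.const_mul (1-θ)).add (hgseq1.const_mul θ)).add (tendsto_err (m₀:ℝ))
    simpa using this
  apply tendsto_of_tendsto_of_tendsto_of_le_of_le' hlow hup
  · filter_upwards [eventually_ge_atTop 1] with n hn
    have hM : (1:ℝ) ≤ ((m₀ + n : ℕ) : ℝ) := by
      have : 1 ≤ m₀ + n := le_add_left hn
      exact_mod_cast this
    have hxe : x + (n:ℝ) = ((m₀ + n : ℕ) : ℝ) + θ := by push_cast; rw [hθdef]; ring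
    have := gfun_lower hM hθ0 hθ1
    rw [← hxe] at this
    have hcast : ((m₀ + n : ℕ) : ℝ) = (m₀:ℝ) + (n:ℝ) := by push_cast; ring
    rw [hcast] at this ⊢
    linarith
  · filter_upwards [eventually_ge_atTop 1] with n hn
    have hM : (1:ℝ) ≤ ((m₀ + n : ℕ) : ℝ) := by
      have : 1 ≤ m₀ + n := le_add_left hn
      exact_mod_cast this
    have hxe : x + (n:ℝ) = ((m₀ + n : ℕ) : ℝ) + θ := by push_cast; rw [hθdef]; ring
    have h1 := gfun_upper hM hθ0 hθ1
    rw [← hxe] at h1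
    have hcast : ((m₀ + n : ℕ) : ℝ) = (m₀:ℝ) + (n:ℝ) := by push_cast; ring
    have hcast1 : ((m₀ + n : ℕ) : ℝ) + 1 = ((m₀ + n + 1 : ℕ) : ℝ) := by push_cast; ring
    rw [hcast1] at h1
    rw [hcast] at h1 ⊢
    linarith

lemma gfun_eq_mu {x : ℝ} (hx : 0 < x) : gfun x = mu x := by
  have hrec : ∀ n : ℕ, gfun x - mu x = gfun (x + n) - mu (x + n) := by
    intro n
    induction n with
    | zero => simp
    | succ k ih =>
      have hxk : 0 < x + (k:ℝ) := by positivity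
      have h1 := gfun_rec hxk
      have h2 := mu_rec hxk
      have e : x + ((k:ℕ)+1:ℕ) = (x + (k:ℝ)) + 1 := by push_cast; ring
      rw [e]
      linarith
  have h0 : Tendsto (fun n : ℕ => gfun (x+n) - mu (x+n)) atTop (𝓝 0) := by
    simpa using (tendsto_gfun_shift hx).sub (tendsto_mu_shift hx)
  have hconst : Tendsto (fun _ : ℕ => gfun x - mu x) atTop (𝓝 (gfun x - mu x)) :=
    tendsto_const_nhds
  have := tendsto_nhds_unique (hconst.congr (fun n => hrec n)) h0
  linarith


end BinetAux

/-- For `x > 0`, `σ(x) = 12x · ∫₀^∞ φ(t)·e^{−xt} dt`. -/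
theorem stirlingSigma_eq_integral :
    ∀ x : ℝ, 0 < x →
      stirlingSigma x = 12 * x * ∫ t in Set.Ioi (0 : ℝ), binetPhi t * Real.exp (-x * t) := by
  intro x hx
  rw [stirlingSigma, BinetAux.gfun_eq hx, BinetAux.gfun_eq_mu hx]
  rfl
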